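/- Let ⟨G, Eℓ⟩ be a two-player game graph with live edges and let T, Q ⊆ V. Define Z* := νY. μX. ( T ∪ (Q ∩ Apre(Y, X)) ). Then Z* equals the winning region W of Player 0 in the fair adversarial game over ⟨G, Eℓ⟩ for the safe-reachability winning condition ψ = Q U T (i.e. the set of plays π for which there exists k with π(k) ∈ T and π(i) ∈ Q for all i < k). Moreover, there exists a memoryless Player-0 strategy that wins the fair adversarial game for ψ from every vertex of Z*. -/
import Mathlib


/-- Least fixed point of a set transformer (Knaster–Tarski form). -/
def lfpSet {V : Type*} (f : Set V → Set V) : Set V := sInf {X | f X ⊆ X}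

/-- Greatest fixed point of a set transformer (Knaster–Tarski form). -/
def gfpSet {V : Type*} (f : Set V → Set V) : Set V := sSup {X | X ⊆ f X}

/-- A two-player game graph with live edges: vertices are partitioned into
Player-0 vertices `V0` and Player-1 vertices `V1`, every vertex has a successor,
and live edges `El` are Player-1 edges. -/
structure LiveGameGraph (V : Type*) where
  V0 : Set V
  V1 : Set V
  E : V → V → Prop
  El : V → V → Prop
  cover : V0 ∪ V1 = Set.univ
  disj : V0 ∩ V1 = ∅
  succ_nonempty : ∀ v : V, ∃ w, E v w
  live_sub : ∀ v w, El v w → v ∈ V1 ∧ E v w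

namespace LiveGameGraph

variable {V : Type*}

/-- Pre∃0(S) -/
def pre0 (Gm : LiveGameGraph V) (S : Set V) : Set V :=
  {v | v ∈ Gm.V0 ∧ ∃ w, Gm.E v w ∧ w ∈ S}

/-- Pre∀1(S) -/
def pre1 (Gm : LiveGameGraph V) (S : Set V) : Set V :=
  {v | v ∈ Gm.V1 ∧ ∀ w, Gm.E v w → w ∈ S}

/-- Cpre(S) -/
def cpre (Gm : LiveGameGraph V) (S : Set V) : Set V := Gm.pre0 S ∪ Gm.pre1 S

/-- Lpre∃(T) -/
def lpre (Gm : LiveGameGraph V) (T : Set V) : Set V :=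
  {v | ∃ w, Gm.El v w ∧ w ∈ T}

/-- Apre(S,T) -/
def apre (Gm : LiveGameGraph V) (S T : Set V) : Set V :=
  Gm.cpre T ∪ (Gm.lpre T ∩ Gm.pre1 S)

end LiveGameGraph

namespace LiveGameGraph

variable {V : Type*}

/-- A play is strongly transition fair if every live edge whose source is visited
infinitely often is itself taken infinitely often. -/
def StronglyFair (Gm : LiveGameGraph V) (π : ℕ → V) : Prop :=
  ∀ v w, Gm.El v w → {i | π i = v}.Infinite → {i | π i = v ∧ π (i + 1) = w}.Infinite

/-- A Player-0 strategy: given the history (the prefix before the current vertex)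
and the current vertex, it chooses an `E`-successor whenever the current vertex
belongs to Player 0. -/
def Strategy0 (Gm : LiveGameGraph V) (ρ : List V → V → V) : Prop :=
  ∀ h v, v ∈ Gm.V0 → Gm.E v (ρ h v)

/-- A Player-1 strategy. -/
def Strategy1 (Gm : LiveGameGraph V) (ρ : List V → V → V) : Prop :=
  ∀ h v, v ∈ Gm.V1 → Gm.E v (ρ h v)

/-- The play compliant with the strategies `ρ0` and `ρ1` starting at `v0`. -/
def Compliant (Gm : LiveGameGraph V) (ρ0 ρ1 : List V → V → V) (v0 : V)
    (π : ℕ → V) : Prop :=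
  π 0 = v0 ∧ ∀ i : ℕ,
    (π i ∈ Gm.V0 → π (i + 1) = ρ0 (List.ofFn fun j : Fin i => π j.1) (π i)) ∧
    (π i ∈ Gm.V1 → π (i + 1) = ρ1 (List.ofFn fun j : Fin i => π j.1) (π i))

/-- Player 0 wins the fair adversarial game for the winning condition `φ`
from `v0` using the strategy `ρ0`. -/
def WinsFrom (Gm : LiveGameGraph V) (φ : (ℕ → V) → Prop)
    (ρ0 : List V → V → V) (v0 : V) : Prop :=
  Gm.Strategy0 ρ0 ∧ ∀ ρ1, Gm.Strategy1 ρ1 → ∀ π, Gm.Compliant ρ0 ρ1 v0 π →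
    (Gm.StronglyFair π → φ π)

/-- The winning region of Player 0 in the fair adversarial game for `φ`. -/
def WinningRegion (Gm : LiveGameGraph V) (φ : (ℕ → V) → Prop) : Set V :=
  {v0 | ∃ ρ0, Gm.WinsFrom φ ρ0 v0}

end LiveGameGraph

section FP
variable {V : Type*} {f : Set V → Set V}

lemma lfpSet_le {X : Set V} (h : f X ⊆ X) : lfpSet f ⊆ X := sInf_le h
lemma le_gfpSet {X : Set V} (h : X ⊆ f X) : X ⊆ gfpSet f := le_sSup h

lemma lfpSet_fixed (hf : Monotone f) : f (lfpSet f) = lfpSet f := by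
  have h1 : f (lfpSet f) ⊆ lfpSet f := by
    apply le_sInf
    intro X hX
    exact (hf (lfpSet_le hX)).trans hX
  exact h1.antisymm (lfpSet_le (hf h1))

lemma gfpSet_fixed (hf : Monotone f) : f (gfpSet f) = gfpSet f := by
  have h1 : gfpSet f ⊆ f (gfpSet f) := by
    apply sSup_le
    intro X hX
    exact hX.trans (hf (le_gfpSet hX))
  exact ((le_gfpSet (hf h1)).antisymm' h1).symm

lemma lfpSet_mono {g : Set V → Set V} (h : ∀ X, f X ⊆ g X) : lfpSet f ⊆ lfpSet g := by
  apply le_sInf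
  intro X hX
  exact sInf_le (le_trans (h X) hX)

/-- a monotone chain of sets in a finite type has a stabilization point -/
lemma chain_stab [Fintype V] (S : ℕ → Set V) (hS : Monotone S) : ∃ n, S (n+1) = S n := by
  by_contra h
  push_neg at h
  have key : ∀ n, n ≤ (S n).ncard := by
    intro n
    induction n with
    | zero => exact Nat.zero_le _
    | succ n ih =>
      have hss : S n ⊂ S (n+1) := lt_of_le_of_ne (hS (Nat.le_succ n)) (h n).symm
      have := Set.ncard_lt_ncard hss (Set.toFinite _)
      omega
  have h1 := key (Fintype.card V + 1)
  have h2 : (S (Fintype.card V + 1)).ncard ≤ Fintype.card V := by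
    have := Set.ncard_le_ncard (Set.subset_univ (S (Fintype.card V + 1))) (Set.toFinite _)
    simpa [Set.ncard_univ] using this
  omega

end FP
open Classical

namespace LiveGameGraph
variable {V : Type*} (Gm : LiveGameGraph V) (T Q : Set V)

noncomputable def someSucc (v : V) : V := Classical.choose (Gm.succ_nonempty v)

lemma someSucc_edge (v : V) : Gm.E v (Gm.someSucc v) := Classical.choose_spec (Gm.succ_nonempty v)

lemma mem_V1_of_not_V0 {v : V} (h : v ∉ Gm.V0) : v ∈ Gm.V1 := by
  have := Gm.cover
  have hv : v ∈ Gm.V0 ∪ Gm.V1 := by rw [this]; trivial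
  rcases hv with h0 | h1
  · exact absurd h0 h
  · exact h1

lemma not_V0_of_V1 {v : V} (h : v ∈ Gm.V1) : v ∉ Gm.V0 := by
  intro h0
  have : v ∈ Gm.V0 ∩ Gm.V1 := ⟨h0, h⟩
  rw [Gm.disj] at this
  exact this

lemma pre0_mono : Monotone Gm.pre0 := by
  intro S S' h v hv
  exact ⟨hv.1, hv.2.imp fun w hw => ⟨hw.1, h hw.2⟩⟩

lemma pre1_mono : Monotone Gm.pre1 := by
  intro S S' h v hv
  exact ⟨hv.1, fun w hw => h (hv.2 w hw)⟩

lemma lpre_mono : Monotone Gm.lpre := by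
  intro S S' h v hv
  exact hv.imp fun w hw => ⟨hw.1, h hw.2⟩

lemma apre_mono {Y Y' X X' : Set V} (hY : Y ⊆ Y') (hX : X ⊆ X') :
    Gm.apre Y X ⊆ Gm.apre Y' X' := by
  apply Set.union_subset_union
  · exact Set.union_subset_union (Gm.pre0_mono hX) (Gm.pre1_mono hX)
  · exact Set.inter_subset_inter (Gm.lpre_mono hX) (Gm.pre1_mono hY)

/-- the inner operator -/
def gOp (Y X : Set V) : Set V := T ∪ (Q ∩ Gm.apre Y X)

lemma gOp_mono {Y Y' X X' : Set V} (hY : Y ⊆ Y') (hX : X ⊆ X') :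
    Gm.gOp T Q Y X ⊆ Gm.gOp T Q Y' X' :=
  Set.union_subset_union subset_rfl (Set.inter_subset_inter subset_rfl (Gm.apre_mono hY hX))

/-- the outer operator -/
def fOp (Y : Set V) : Set V := lfpSet (Gm.gOp T Q Y)

lemma fOp_mono : Monotone (Gm.fOp T Q) := by
  intro Y Y' h
  exact lfpSet_mono fun X => Gm.gOp_mono T Q h subset_rfl

/-- the fixpoint -/
def Zst : Set V := gfpSet (Gm.fOp T Q)

lemma Zst_eq_lfp : Gm.Zst T Q = lfpSet (Gm.gOp T Q (Gm.Zst T Q)) :=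
  (gfpSet_fixed (Gm.fOp_mono T Q)).symm

lemma Zst_fixed : Gm.gOp T Q (Gm.Zst T Q) (Gm.Zst T Q) = Gm.Zst T Q := by
  have h := lfpSet_fixed (f := Gm.gOp T Q (Gm.Zst T Q))
    (fun X X' hh => Gm.gOp_mono T Q subset_rfl hh)
  rw [← Gm.Zst_eq_lfp T Q] at h
  exact h

lemma T_subset_Zst : T ⊆ Gm.Zst T Q := by
  conv_rhs => rw [← Gm.Zst_fixed T Q]
  exact Set.subset_union_left

lemma Zst_diff_Q {v : V} (hv : v ∈ Gm.Zst T Q) (hT : v ∉ T) : v ∈ Q := by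
  rw [← Gm.Zst_fixed T Q] at hv
  rcases hv with h | h
  · exact absurd h hT
  · exact h.1

end LiveGameGraph
namespace LiveGameGraph
set_option linter.unusedSectionVars false
variable {V : Type*} [Fintype V] (Gm : LiveGameGraph V) (T Q : Set V)

/-- inner iterates -/
noncomputable def XX (n : ℕ) : Set V := (Gm.gOp T Q (Gm.Zst T Q))^[n] ∅

lemma XX_mono : Monotone (Gm.XX T Q) := by
  have key : ∀ n, Gm.XX T Q n ⊆ Gm.XX T Q (n+1) := by
    intro n
    induction n with
    | zero => simp [XX]
    | succ n ih =>
      show (Gm.gOp T Q _)^[n+1] ∅ ⊆ (Gm.gOp T Q _)^[n+2] ∅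
      rw [Function.iterate_succ_apply', Function.iterate_succ_apply']
      exact Gm.gOp_mono T Q subset_rfl ih
  exact monotone_nat_of_le_succ key

lemma XX_subset_Zst (n : ℕ) : Gm.XX T Q n ⊆ Gm.Zst T Q := by
  induction n with
  | zero => simp [XX]
  | succ n ih =>
    show (Gm.gOp T Q _)^[n+1] ∅ ⊆ _
    rw [Function.iterate_succ_apply']
    calc Gm.gOp T Q (Gm.Zst T Q) (Gm.XX T Q n) ⊆ Gm.gOp T Q (Gm.Zst T Q) (Gm.Zst T Q) :=
          Gm.gOp_mono T Q subset_rfl ih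
      _ = Gm.Zst T Q := Gm.Zst_fixed T Q

lemma exists_XX {v : V} (hv : v ∈ Gm.Zst T Q) : ∃ n, v ∈ Gm.XX T Q n := by
  obtain ⟨N, hN⟩ := chain_stab (Gm.XX T Q) (Gm.XX_mono T Q)
  have hfix : Gm.gOp T Q (Gm.Zst T Q) (Gm.XX T Q N) = Gm.XX T Q N := by
    have : Gm.XX T Q (N+1) = Gm.gOp T Q (Gm.Zst T Q) (Gm.XX T Q N) :=
      Function.iterate_succ_apply' _ _ _
    rw [← this, hN]
  have hsub : Gm.Zst T Q ⊆ Gm.XX T Q N := by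
    rw [Gm.Zst_eq_lfp T Q]
    exact lfpSet_le hfix.subset
  exact ⟨N, hsub hv⟩

/-- rank of a vertex in the inner fixpoint -/
noncomputable def murank (v : V) : ℕ := sInf {n | v ∈ Gm.XX T Q n}

lemma murank_mem {v : V} (hv : v ∈ Gm.Zst T Q) : v ∈ Gm.XX T Q (Gm.murank T Q v) :=
  Nat.sInf_mem (Gm.exists_XX T Q hv)

lemma murank_lt {v : V} {m : ℕ} (hm : m < Gm.murank T Q v) : v ∉ Gm.XX T Q m :=
  Nat.notMem_of_lt_sInf hm

lemma lt_murank_of_mem_XX {v w : V} {m : ℕ} (hw : w ∈ Gm.XX T Q m)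
    (hm : m < Gm.murank T Q v) : Gm.murank T Q w < Gm.murank T Q v :=
  lt_of_le_of_lt (Nat.sInf_le hw) hm

lemma murank_pos {v : V} (hv : v ∈ Gm.Zst T Q) : 1 ≤ Gm.murank T Q v := by
  rcases Nat.eq_zero_or_pos (Gm.murank T Q v) with h | h
  · have := Gm.murank_mem T Q hv
    rw [h] at this
    simp [XX] at this
  · exact h

lemma sound_vertex {v : V} (hv : v ∈ Gm.Zst T Q) (hT : v ∉ T) :
    v ∈ Q ∧ v ∈ Gm.apre (Gm.Zst T Q) (Gm.XX T Q (Gm.murank T Q v - 1)) := by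
  have h1 := Gm.murank_mem T Q hv
  obtain ⟨m, hm⟩ : ∃ m, Gm.murank T Q v = m + 1 :=
    ⟨Gm.murank T Q v - 1, by have := Gm.murank_pos T Q hv; omega⟩
  rw [hm] at h1
  have : Gm.XX T Q (m+1) = Gm.gOp T Q (Gm.Zst T Q) (Gm.XX T Q m) :=
    Function.iterate_succ_apply' _ _ _
  rw [this] at h1
  rcases h1 with h | h
  · exact absurd h hT
  · rw [hm]
    simpa using h

lemma sound_V0 {v : V} (hv : v ∈ Gm.Zst T Q) (hT : v ∉ T) (h0 : v ∈ Gm.V0) :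
    ∃ w, Gm.E v w ∧ w ∈ Gm.XX T Q (Gm.murank T Q v - 1) := by
  rcases (Gm.sound_vertex T Q hv hT).2 with (h | h) | h
  · exact h.2
  · exact absurd h0 (Gm.not_V0_of_V1 h.1)
  · exact absurd h0 (Gm.not_V0_of_V1 h.2.1)

lemma sound_V1 {v : V} (hv : v ∈ Gm.Zst T Q) (hT : v ∉ T) (h1 : v ∈ Gm.V1) :
    (∀ w, Gm.E v w → w ∈ Gm.XX T Q (Gm.murank T Q v - 1)) ∨
    ((∃ w, Gm.El v w ∧ w ∈ Gm.XX T Q (Gm.murank T Q v - 1)) ∧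
      ∀ w, Gm.E v w → w ∈ Gm.Zst T Q) := by
  rcases (Gm.sound_vertex T Q hv hT).2 with (h | h) | h
  · exact absurd h.1 (Gm.not_V0_of_V1 h1)
  · exact Or.inl h.2
  · exact Or.inr ⟨h.1, h.2.2⟩

/-- outer iterates -/
noncomputable def WW (k : ℕ) : Set V := (Gm.fOp T Q)^[k] Set.univ

lemma WW_anti : Antitone (Gm.WW T Q) := by
  have key : ∀ n, Gm.WW T Q (n+1) ⊆ Gm.WW T Q n := by
    intro n
    induction n with
    | zero => simp [WW]
    | succ n ih =>
      have e1 : Gm.WW T Q (n+2) = Gm.fOp T Q (Gm.WW T Q (n+1)) :=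
        Function.iterate_succ_apply' _ _ _
      have e2 : Gm.WW T Q (n+1) = Gm.fOp T Q (Gm.WW T Q n) :=
        Function.iterate_succ_apply' _ _ _
      calc Gm.WW T Q (n+2) = Gm.fOp T Q (Gm.WW T Q (n+1)) := e1
        _ ⊆ Gm.fOp T Q (Gm.WW T Q n) := Gm.fOp_mono T Q ih
        _ = Gm.WW T Q (n+1) := e2.symm
  exact antitone_nat_of_succ_le key

lemma Zst_subset_WW (k : ℕ) : Gm.Zst T Q ⊆ Gm.WW T Q k := by
  induction k with
  | zero => simp [WW]
  | succ k ih =>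
    show _ ⊆ (Gm.fOp T Q)^[k+1] Set.univ
    rw [Function.iterate_succ_apply']
    calc Gm.Zst T Q = Gm.fOp T Q (Gm.Zst T Q) := (gfpSet_fixed (Gm.fOp_mono T Q)).symm
      _ ⊆ Gm.fOp T Q (Gm.WW T Q k) := Gm.fOp_mono T Q ih

lemma exists_WW {v : V} (hv : v ∉ Gm.Zst T Q) : ∃ k, v ∉ Gm.WW T Q k := by
  obtain ⟨N, hN⟩ := chain_stab (fun k => (Gm.WW T Q k)ᶜ) (fun a b hab => by
    simpa using Set.compl_subset_compl.mpr (Gm.WW_anti T Q hab))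
  have hEq : Gm.WW T Q (N+1) = Gm.WW T Q N := by
    have := hN
    simp only [compl_inj_iff] at this
    exact this
  have hfix : Gm.fOp T Q (Gm.WW T Q N) = Gm.WW T Q N := by
    have h : Gm.WW T Q (N+1) = Gm.fOp T Q (Gm.WW T Q N) := Function.iterate_succ_apply' _ _ _
    rw [← h, hEq]
  have hsub : Gm.WW T Q N ⊆ Gm.Zst T Q := le_gfpSet hfix.superset
  exact ⟨N, fun h => hv (hsub h)⟩

noncomputable def nurank (v : V) : ℕ := sInf {k | v ∉ Gm.WW T Q k}

lemma nurank_mem {v : V} (hv : v ∉ Gm.Zst T Q) : v ∉ Gm.WW T Q (Gm.nurank T Q v) :=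
  Nat.sInf_mem (Gm.exists_WW T Q hv)

lemma nurank_lt {v : V} {m : ℕ} (hm : m < Gm.nurank T Q v) : v ∈ Gm.WW T Q m := by
  by_contra h
  exact absurd (Nat.sInf_le h) (not_le.mpr hm)

lemma nurank_le_of_notMem {w : V} {m : ℕ} (hw : w ∉ Gm.WW T Q m) :
    Gm.nurank T Q w ≤ m := Nat.sInf_le hw

lemma not_Zst_of_not_WW {v : V} {m : ℕ} (hv : v ∉ Gm.WW T Q m) : v ∉ Gm.Zst T Q :=
  fun h => hv (Gm.Zst_subset_WW T Q m h)

lemma nurank_pos {v : V} (hv : v ∉ Gm.Zst T Q) : 1 ≤ Gm.nurank T Q v := by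
  rcases Nat.eq_zero_or_pos (Gm.nurank T Q v) with h | h
  · have := Gm.nurank_mem T Q hv
    rw [h] at this
    simp [WW] at this
  · exact h

end LiveGameGraph
namespace LiveGameGraph
set_option linter.unusedSectionVars false
variable {V : Type*} [Fintype V] (Gm : LiveGameGraph V) (T Q : Set V)

lemma WW_fixed (k : ℕ) :
    Gm.gOp T Q (Gm.WW T Q k) (Gm.WW T Q (k+1)) = Gm.WW T Q (k+1) := by
  have e : Gm.WW T Q (k+1) = lfpSet (Gm.gOp T Q (Gm.WW T Q k)) :=
    Function.iterate_succ_apply' _ _ _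
  have h := lfpSet_fixed (f := Gm.gOp T Q (Gm.WW T Q k))
    (fun X X' hh => Gm.gOp_mono T Q subset_rfl hh)
  rw [← e] at h
  exact h

lemma comp_notT {v : V} (hv : v ∉ Gm.Zst T Q) : v ∉ T :=
  fun h => hv (Gm.T_subset_Zst T Q h)

lemma comp_vertex {v : V} (hv : v ∉ Gm.Zst T Q) (hQ : v ∈ Q) :
    v ∉ Gm.cpre (Gm.WW T Q (Gm.nurank T Q v)) ∧
    (v ∉ Gm.lpre (Gm.WW T Q (Gm.nurank T Q v)) ∨
      v ∉ Gm.pre1 (Gm.WW T Q (Gm.nurank T Q v - 1))) := by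
  obtain ⟨m, hm⟩ : ∃ m, Gm.nurank T Q v = m + 1 :=
    ⟨Gm.nurank T Q v - 1, by have := Gm.nurank_pos T Q hv; omega⟩
  have h1 := Gm.nurank_mem T Q hv
  rw [hm] at h1
  rw [← Gm.WW_fixed T Q m] at h1
  have h2 : v ∉ Gm.apre (Gm.WW T Q m) (Gm.WW T Q (m+1)) := by
    intro h
    exact h1 (Or.inr ⟨hQ, h⟩)
  rw [hm]
  simp only [Nat.add_sub_cancel]
  constructor
  · intro h
    exact h2 (Or.inl h)
  · by_contra h
    push_neg at h
    exact h2 (Or.inr ⟨h.1, h.2⟩)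

lemma comp_V0 {v : V} (hv : v ∉ Gm.Zst T Q) (hQ : v ∈ Q) (h0 : v ∈ Gm.V0) :
    ∀ w, Gm.E v w → w ∉ Gm.WW T Q (Gm.nurank T Q v) := by
  intro w hw hmem
  exact (Gm.comp_vertex T Q hv hQ).1 (Or.inl ⟨h0, w, hw, hmem⟩)

lemma comp_V1_exists {v : V} (hv : v ∉ Gm.Zst T Q) (hQ : v ∈ Q) (h1 : v ∈ Gm.V1) :
    ∃ w, Gm.E v w ∧ w ∉ Gm.WW T Q (Gm.nurank T Q v) := by
  have h := (Gm.comp_vertex T Q hv hQ).1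
  by_contra hc
  push_neg at hc
  exact h (Or.inr ⟨h1, fun w hw => hc w hw⟩)

lemma comp_V1_cases {v : V} (hv : v ∉ Gm.Zst T Q) (hQ : v ∈ Q) (h1 : v ∈ Gm.V1) :
    (∃ w, Gm.E v w ∧ w ∉ Gm.WW T Q (Gm.nurank T Q v - 1)) ∨
    (∀ w, Gm.El v w → w ∉ Gm.WW T Q (Gm.nurank T Q v)) := by
  rcases (Gm.comp_vertex T Q hv hQ).2 with h | h
  · right
    intro w hw hmem
    exact h ⟨w, hw, hmem⟩
  · left
    by_contra hc
    push_neg at hc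
    exact h ⟨h1, fun w hw => hc w hw⟩

end LiveGameGraph
namespace LiveGameGraph
set_option linter.unusedSectionVars false
set_option maxHeartbeats 1000000
variable {V : Type*} [Fintype V] (Gm : LiveGameGraph V) (T Q : Set V)

/-- the memoryless winning strategy for Player 0 -/
noncomputable def sig (v : V) : V :=
  if h : v ∈ Gm.V0 ∧ v ∈ Gm.Zst T Q ∧ v ∉ T then
    Classical.choose (Gm.sound_V0 T Q h.2.1 h.2.2 h.1)
  else Gm.someSucc v

lemma sig_edge (v : V) (h0 : v ∈ Gm.V0) : Gm.E v (Gm.sig T Q v) := by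
  unfold sig
  split
  · next h => exact (Classical.choose_spec (Gm.sound_V0 T Q h.2.1 h.2.2 h.1)).1
  · exact Gm.someSucc_edge v

lemma sig_mem {v : V} (h0 : v ∈ Gm.V0) (hv : v ∈ Gm.Zst T Q) (hT : v ∉ T) :
    Gm.sig T Q v ∈ Gm.XX T Q (Gm.murank T Q v - 1) := by
  unfold sig
  split
  · next h => exact (Classical.choose_spec (Gm.sound_V0 T Q h.2.1 h.2.2 h.1)).2
  · next h => exact absurd ⟨h0, hv, hT⟩ h

/-- shifting infinite sets of indices -/
lemma shift_infinite {π : ℕ → V} {w : V} (h : {i | π (i+1) = w}.Infinite) :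
    {i | π i = w}.Infinite := by
  have hsub : (fun i => i + 1) '' {i | π (i+1) = w} ⊆ {i | π i = w} := by
    rintro _ ⟨i, hi, rfl⟩
    exact hi
  exact (h.image (Function.Injective.injOn (add_left_injective 1))).mono hsub

lemma exists_infinite_fiber_play (π : ℕ → V) : ∃ v, {i | π i = v}.Infinite := by
  obtain ⟨v, hv⟩ := Finite.exists_infinite_fiber π
  refine ⟨v, ?_⟩
  rw [← Set.infinite_coe_iff]
  exact hv

theorem soundness {v0 : V} (hv0 : v0 ∈ Gm.Zst T Q) :
    Gm.WinsFrom (fun π => ∃ k, π k ∈ T ∧ ∀ i < k, π i ∈ Q)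
      (fun _ v => Gm.sig T Q v) v0 := by
  constructor
  · exact fun h v hv => Gm.sig_edge T Q v hv
  intro ρ1 hρ1 π hπ hfair
  by_contra hψ
  push_neg at hψ
  -- every vertex of the play is in Zst and not in T
  have key : ∀ i, π i ∈ Gm.Zst T Q ∧ π i ∉ T := by
    intro i
    induction i using Nat.strong_induction_on with
    | _ i ih =>
      have hmem : π i ∈ Gm.Zst T Q := by
        match i with
        | 0 => rw [hπ.1]; exact hv0
        | (j+1) =>
          obtain ⟨hjZ, hjT⟩ := ih j (Nat.lt_succ_self j)
          by_cases h0 : π j ∈ Gm.V0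
          · have hstep := (hπ.2 j).1 h0
            rw [hstep]
            exact Gm.XX_subset_Zst T Q _ (Gm.sig_mem T Q h0 hjZ hjT)
          · have h1 := Gm.mem_V1_of_not_V0 h0
            have hstep := (hπ.2 j).2 h1
            have hedge : Gm.E (π j) (π (j+1)) := by
              rw [hstep]; exact hρ1 _ _ h1
            rcases Gm.sound_V1 T Q hjZ hjT h1 with h | h
            · exact Gm.XX_subset_Zst T Q _ (h _ hedge)
            · exact h.2 _ hedge
      refine ⟨hmem, fun hT => ?_⟩
      obtain ⟨j, hj, hjQ⟩ := hψ i hT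
      exact hjQ (Gm.Zst_diff_Q T Q (ih j hj).1 (ih j hj).2)
  -- a vertex visited infinitely often of minimal rank
  obtain ⟨u, hu⟩ := exists_infinite_fiber_play π
  obtain ⟨v, hvS, hmin⟩ := Set.exists_min_image {v | {i | π i = v}.Infinite}
    (Gm.murank T Q) (Set.toFinite _) ⟨u, hu⟩
  obtain ⟨i0, hi0⟩ := hvS.nonempty
  have hvZ : v ∈ Gm.Zst T Q := hi0 ▸ (key i0).1
  have hvT : v ∉ T := hi0 ▸ (key i0).2
  have hcontra : ∀ w, w ∈ Gm.XX T Q (Gm.murank T Q v - 1) →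
      {i | π i = w}.Infinite → False := by
    intro w hw hwInf
    have h1 : Gm.murank T Q w < Gm.murank T Q v :=
      Gm.lt_murank_of_mem_XX T Q hw (by have := Gm.murank_pos T Q hvZ; omega)
    exact absurd (hmin w hwInf) (not_le.mpr h1)
  by_cases h0 : v ∈ Gm.V0
  · -- Player 0 vertex: the strategy moves to lower rank
    have hw := Gm.sig_mem T Q h0 hvZ hvT
    apply hcontra _ hw
    apply shift_infinite
    apply hvS.mono
    intro i hi
    have hiv : π i = v := hi
    have hstep := (hπ.2 i).1 (by rw [hiv]; exact h0)
    show π (i+1) = Gm.sig T Q v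
    rw [hstep, hiv]
  · have h1 := Gm.mem_V1_of_not_V0 h0
    rcases Gm.sound_V1 T Q hvZ hvT h1 with h | h
    · -- all successors have lower rank: pigeonhole
      have hinf : Infinite ↑{i | π i = v} := Set.infinite_coe_iff.mpr hvS
      obtain ⟨w, hw⟩ := Finite.exists_infinite_fiber
        (fun i : {i | π i = v} => π (i.1 + 1))
      have hwset : {i | π i = v ∧ π (i+1) = w}.Infinite := by
        have h2 : Set.Infinite ((fun i : {i | π i = v} => π (i.1 + 1)) ⁻¹' {w} : Set _) :=
          Set.infinite_coe_iff.mp hw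
        have h3 := h2.image (Subtype.val_injective.injOn)
        apply h3.mono
        rintro _ ⟨⟨i, hiv⟩, hiw, rfl⟩
        exact ⟨hiv, hiw⟩
      obtain ⟨j, hjv, hjw⟩ := hwset.nonempty
      have hedge : Gm.E v w := by
        have hstep := (hπ.2 j).2 (hjv ▸ h1)
        have : Gm.E (π j) (π (j+1)) := by rw [hstep]; exact hρ1 _ _ (hjv ▸ h1)
        rwa [hjv, hjw] at this
      apply hcontra w (h w hedge)
      exact shift_infinite (hwset.mono fun i hi => hi.2)
    · -- live edge to lower rank: use fairness
      obtain ⟨⟨w, hEl, hwX⟩, _⟩ := h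
      have := hfair v w hEl hvS
      apply hcontra w hwX
      exact shift_infinite (this.mono fun i hi => hi.2)

end LiveGameGraph
namespace LiveGameGraph
set_option linter.unusedSectionVars false
set_option maxHeartbeats 1000000
variable {V : Type*} [Fintype V] (Gm : LiveGameGraph V) (T Q : Set V)

/-- counting occurrences in a list -/
noncomputable def cnt (v : V) : List V → ℕ
  | [] => 0
  | x :: l => (if x = v then 1 else 0) + cnt v l

lemma cnt_append (v x : V) (l : List V) :
    cnt v (l ++ [x]) = cnt v l + (if x = v then 1 else 0) := by
  induction l with
  | nil => simp [cnt]
  | cons y l ih =>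
    show (if y = v then 1 else 0) + cnt v (l ++ [x]) = _
    rw [ih]
    show _ = (if y = v then 1 else 0) + cnt v l + _
    ring

/-- the round-robin candidate -/
noncomputable def rrCand (c : ℕ) (v : V) : V :=
  (Fintype.equivFin V).symm
    ⟨c % Fintype.card V, Nat.mod_lt _ (Fintype.card_pos_iff.mpr ⟨v⟩)⟩

/-- round-robin move with fallback -/
noncomputable def rr (c : ℕ) (v fb : V) : V :=
  if Gm.El v (rrCand c v) then rrCand c v else fb

lemma rr_edge {c : ℕ} {v fb : V} (hfb : Gm.E v fb) : Gm.E v (Gm.rr c v fb) := by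
  unfold rr
  split
  · next h => exact (Gm.live_sub _ _ h).2
  · exact hfb

lemma rr_eq_of_live {c : ℕ} {v fb : V} (h : Gm.El v (rrCand c v)) :
    Gm.rr c v fb = rrCand c v := if_pos h

/-- fallback in fair mode -/
noncomputable def fbFair (v : V) : V :=
  if h : ∃ w, Gm.El v w then Classical.choose h else Gm.someSucc v

lemma fbFair_edge (v : V) : Gm.E v (Gm.fbFair v) := by
  unfold fbFair
  split
  · next h => exact (Gm.live_sub _ _ (Classical.choose_spec h)).2
  · exact Gm.someSucc_edge v

/-- fallback in escape mode -/
noncomputable def fbEsc (v : V) : V :=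
  if h : ∃ w, Gm.El v w then Classical.choose h
  else if hb : ∃ w, Gm.E v w ∧ w ∉ Gm.WW T Q (Gm.nurank T Q v) then Classical.choose hb
  else Gm.someSucc v

lemma fbEsc_edge (v : V) : Gm.E v (Gm.fbEsc T Q v) := by
  unfold fbEsc
  split
  · next h => exact (Gm.live_sub _ _ (Classical.choose_spec h)).2
  · split
    · next hb => exact (Classical.choose_spec hb).1
    · exact Gm.someSucc_edge v

/-- the doomed predicate on histories -/
def doomed (l : List V) : Prop :=
  ∃ i, ∃ _ : i < l.length, l[i] ∉ Q ∧ ∀ j, j ≤ i → ∀ hj : j < l.length, l[j] ∉ T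

lemma doomed_append {l : List V} (x : V) (h : doomed T Q l) : doomed T Q (l ++ [x]) := by
  obtain ⟨i, hi, hQ, hT⟩ := h
  refine ⟨i, by simp; omega, ?_, ?_⟩
  · rw [List.getElem_append_left hi]
    exact hQ
  · intro j hj hjl
    have hjl' : j < l.length := by omega
    rw [List.getElem_append_left hjl']
    exact hT j hj hjl'

/-- the spoiling strategy of Player 1 -/
noncomputable def rho1 (h : List V) (v : V) : V :=
  if doomed T Q (h ++ [v]) ∨ v ∈ Gm.Zst T Q ∨ v ∉ Q ∨ v ∉ Gm.V1 then
    Gm.rr (cnt v h) v (Gm.fbFair v)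
  else if h1 : ∃ w, Gm.E v w ∧ w ∉ Gm.WW T Q (Gm.nurank T Q v - 1) then Classical.choose h1
  else Gm.rr (cnt v h) v (Gm.fbEsc T Q v)

lemma rho1_strategy : Gm.Strategy1 (Gm.rho1 T Q) := by
  intro h v _
  unfold rho1
  split
  · exact Gm.rr_edge (Gm.fbFair_edge v)
  · split
    · next h1 => exact (Classical.choose_spec h1).1
    · exact Gm.rr_edge (Gm.fbEsc_edge T Q v)

lemma rho1_fair_mode {h : List V} {v : V} (hd : doomed T Q (h ++ [v])) :
    Gm.rho1 T Q h v = Gm.rr (cnt v h) v (Gm.fbFair v) := by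
  unfold rho1
  rw [if_pos (Or.inl hd)]

/-- in escape mode the strategy stays outside `WW (nurank v)` -/
lemma rho1_escape {h : List V} {v : V} (hd : ¬ doomed T Q (h ++ [v]))
    (hZ : v ∉ Gm.Zst T Q) (hQ : v ∈ Q) (hV : v ∈ Gm.V1) :
    Gm.rho1 T Q h v ∉ Gm.WW T Q (Gm.nurank T Q v) := by
  unfold rho1
  rw [if_neg (by push_neg; exact ⟨hd, hZ, hQ, hV⟩)]
  split
  · next h1 =>
    have hspec := Classical.choose_spec h1
    intro hmem
    exact hspec.2 (Gm.WW_anti T Q (Nat.sub_le _ 1) hmem)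
  · next h1 =>
    -- no successor escapes WW (nurank v - 1); so all live successors escape WW (nurank v)
    have hlive : ∀ w, Gm.El v w → w ∉ Gm.WW T Q (Gm.nurank T Q v) := by
      rcases Gm.comp_V1_cases T Q hZ hQ hV with hc | hc
      · exact absurd hc h1
      · exact hc
    unfold rr
    split
    · next hcand => exact hlive _ hcand
    · unfold fbEsc
      split
      · next hex => exact hlive _ (Classical.choose_spec hex)
      · split
        · next hb => exact (Classical.choose_spec hb).2
        · next hb => exact absurd (Gm.comp_V1_exists T Q hZ hQ hV) hb

/-- in escape mode with no rank-decreasing successor, the strategy is round-robin -/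
lemma rho1_escape_rr {h : List V} {v : V} (hd : ¬ doomed T Q (h ++ [v]))
    (hZ : v ∉ Gm.Zst T Q) (hQ : v ∈ Q) (hV : v ∈ Gm.V1)
    (h1 : ¬ ∃ w, Gm.E v w ∧ w ∉ Gm.WW T Q (Gm.nurank T Q v - 1)) :
    Gm.rho1 T Q h v = Gm.rr (cnt v h) v (Gm.fbEsc T Q v) := by
  unfold rho1
  rw [if_neg (by push_neg; exact ⟨hd, hZ, hQ, hV⟩), dif_neg h1]

/-- the rank-decreasing case of escape mode -/
lemma rho1_escape_dec {h : List V} {v : V} (hd : ¬ doomed T Q (h ++ [v]))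
    (hZ : v ∉ Gm.Zst T Q) (hQ : v ∈ Q) (hV : v ∈ Gm.V1)
    (h1 : ∃ w, Gm.E v w ∧ w ∉ Gm.WW T Q (Gm.nurank T Q v - 1)) :
    Gm.rho1 T Q h v ∉ Gm.WW T Q (Gm.nurank T Q v - 1) := by
  unfold rho1
  rw [if_neg (by push_neg; exact ⟨hd, hZ, hQ, hV⟩), dif_pos h1]
  exact (Classical.choose_spec h1).2

end LiveGameGraph
namespace LiveGameGraph
set_option linter.unusedSectionVars false
set_option maxHeartbeats 1000000
variable {V : Type*} [Fintype V] (Gm : LiveGameGraph V) (T Q : Set V)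

lemma cnt_eq_count (π : ℕ → V) (v : V) (i : ℕ) :
    cnt v (List.ofFn fun j : Fin i => π j.1) = Nat.count (fun j => π j = v) i := by
  induction i with
  | zero => simp [cnt, Nat.count]
  | succ i ih =>
    have e : (List.ofFn fun j : Fin (i+1) => π j.1) =
        (List.ofFn fun j : Fin i => π j.1) ++ [π i] := by
      rw [List.ofFn_succ', List.concat_eq_append]
      rfl
    rw [e, cnt_append, ih, Nat.count_succ]

lemma fair_of_tail (π : ℕ → V) (N : ℕ)
    (h : ∀ i, N ≤ i → π i ∈ Gm.V1 →
      ∃ fb, π (i+1) = Gm.rr (cnt (π i) (List.ofFn fun j : Fin i => π j.1)) (π i) fb) :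
    Gm.StronglyFair π := by
  intro v w hEl hinf
  have hv1 : v ∈ Gm.V1 := (Gm.live_sub v w hEl).1
  have hn : 0 < Fintype.card V := Fintype.card_pos_iff.mpr ⟨v⟩
  set p : ℕ → Prop := fun i => π i = v with hp
  have hpinf : (setOf p).Infinite := hinf
  set n := Fintype.card V with hndef
  set k : ℕ := ((Fintype.equivFin V) w : ℕ) with hk
  have hkn : k < n := ((Fintype.equivFin V) w).isLt
  have key : ∀ j : ℕ, π (Nat.nth p (k + n * (j + N + 1))) = v ∧
      π (Nat.nth p (k + n * (j + N + 1)) + 1) = w := by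
    intro j
    set m := k + n * (j + N + 1) with hm
    set i := Nat.nth p m with hi
    have hpv : π i = v := Nat.nth_mem_of_infinite hpinf m
    have hmN : N ≤ m := by
      have : j + N + 1 ≤ n * (j + N + 1) := Nat.le_mul_of_pos_left _ hn
      omega
    have hiN : N ≤ i := le_trans hmN (Nat.nth_strictMono hpinf).le_apply
    obtain ⟨fb, hfb⟩ := h i hiN (hpv ▸ hv1)
    have hcnt : cnt (π i) (List.ofFn fun j : Fin i => π j.1) = m := by
      rw [hpv, cnt_eq_count]
      exact Nat.count_nth_of_infinite hpinf m
    have hmod : m % Fintype.card V = k := by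
      rw [hm, ← hndef, Nat.add_mul_mod_self_left, Nat.mod_eq_of_lt hkn]
    have hcand : rrCand m (π i) = w := by
      apply (Fintype.equivFin V).injective
      unfold rrCand
      rw [Equiv.apply_symm_apply]
      apply Fin.ext
      exact hmod
    have hrr : Gm.rr (cnt (π i) (List.ofFn fun j : Fin i => π j.1)) (π i) fb = w := by
      rw [hcnt]
      have hlive : Gm.El (π i) (rrCand m (π i)) := by rw [hcand, hpv]; exact hEl
      rw [Gm.rr_eq_of_live hlive, hcand]
    exact ⟨hpv, by rw [hfb, hrr]⟩
  have hmono : StrictMono (fun j : ℕ => Nat.nth p (k + n * (j + N + 1))) := by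
    apply (Nat.nth_strictMono hpinf).comp
    intro a b hlt
    have h2 : n * (a + N + 1) < n * (b + N + 1) :=
      Nat.mul_lt_mul_of_le_of_lt (le_refl n) (by omega) hn
    simp only
    omega
  exact Set.infinite_of_injective_forall_mem hmono.injective
    (fun j => ⟨(key j).1, (key j).2⟩)

end LiveGameGraph
namespace LiveGameGraph
set_option linter.unusedSectionVars false
set_option maxHeartbeats 1000000
open Classical in
/-- the play resulting from `ρ0` against the spoiling strategy -/
noncomputable def play {V : Type*} [Fintype V] (Gm : LiveGameGraph V) (T Q : Set V)
    (ρ0 : List V → V → V) (v0 : V) : ℕ → List V × V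
  | 0 => ([], v0)
  | (i+1) =>
      ((Gm.play T Q ρ0 v0 i).1 ++ [(Gm.play T Q ρ0 v0 i).2],
        if (Gm.play T Q ρ0 v0 i).2 ∈ Gm.V0 then
          ρ0 (Gm.play T Q ρ0 v0 i).1 (Gm.play T Q ρ0 v0 i).2
        else Gm.rho1 T Q (Gm.play T Q ρ0 v0 i).1 (Gm.play T Q ρ0 v0 i).2)

variable {V : Type*} [Fintype V] (Gm : LiveGameGraph V) (T Q : Set V)

theorem completeness {v0 : V} (hv0 : v0 ∉ Gm.Zst T Q) :
    v0 ∉ Gm.WinningRegion (fun π => ∃ k, π k ∈ T ∧ ∀ i < k, π i ∈ Q) := by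
  rintro ⟨ρ0, hρ0, hwin⟩
  set π : ℕ → V := fun i => (Gm.play T Q ρ0 v0 i).2 with hπdef
  set hist : ℕ → List V := fun i => (Gm.play T Q ρ0 v0 i).1 with hhist
  have hist_succ : ∀ i, hist (i+1) = hist i ++ [π i] := fun i => rfl
  have hist_eq : ∀ i, hist i = List.ofFn fun j : Fin i => π j.1 := by
    intro i
    induction i with
    | zero => simp [hhist, play]
    | succ i ih =>
      rw [hist_succ, ih, List.ofFn_succ', List.concat_eq_append]
      rfl
  have hstep0 : ∀ i, π i ∈ Gm.V0 → π (i+1) = ρ0 (hist i) (π i) := by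
    intro i h0
    show (if (Gm.play T Q ρ0 v0 i).2 ∈ Gm.V0 then _ else _) = _
    rw [if_pos h0]
  have hstep1 : ∀ i, π i ∉ Gm.V0 → π (i+1) = Gm.rho1 T Q (hist i) (π i) := by
    intro i h0
    show (if (Gm.play T Q ρ0 v0 i).2 ∈ Gm.V0 then _ else _) = _
    rw [if_neg h0]
  have hcomp : Gm.Compliant ρ0 (Gm.rho1 T Q) v0 π := by
    refine ⟨rfl, fun i => ⟨fun h0 => ?_, fun h1 => ?_⟩⟩
    · rw [hstep0 i h0, hist_eq]
    · rw [hstep1 i (Gm.not_V0_of_V1 h1), hist_eq]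
  have hmain := hwin (Gm.rho1 T Q) (Gm.rho1_strategy T Q) π hcomp
  set P : ℕ → Prop := fun i => doomed T Q (hist (i+1)) with hPdef
  have hPmono : ∀ i j, i ≤ j → P i → P j := by
    intro i j hij hPi
    induction j, hij using Nat.le_induction with
    | base => exact hPi
    | succ j hij ih =>
      show doomed T Q (hist (j+2))
      rw [hist_succ]
      exact doomed_append T Q _ ih
  have hdoom_of : ∀ i, π i ∉ Q → (∀ j, j ≤ i → π j ∉ T) → P i := by
    intro i hq hT
    show doomed T Q (hist (i+1))
    rw [hist_eq]
    refine ⟨i, by simp, ?_, ?_⟩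
    · rw [List.getElem_ofFn]
      exact hq
    · intro j hj hjl
      rw [List.getElem_ofFn]
      exact hT j hj
  have houtZ : ∀ i, ¬ P i → π i ∉ Gm.Zst T Q := by
    intro i
    induction i using Nat.strong_induction_on with
    | _ i ih =>
      intro hPi
      match i, ih, hPi with
      | 0, _, _ => exact hv0
      | (j+1), ih, hPi =>
        have hPj : ¬ P j := fun h => hPi (hPmono j (j+1) (Nat.le_succ j) h)
        have hjZ : π j ∉ Gm.Zst T Q := ih j (Nat.lt_succ_self j) hPj
        have hjQ : π j ∈ Q := by
          by_contra hq
          refine hPj (hdoom_of j hq fun jj hjj => ?_)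
          have hPjj : ¬ P jj := fun h => hPj (hPmono jj j hjj h)
          exact Gm.comp_notT T Q (ih jj (by omega) hPjj)
        by_cases h0 : π j ∈ Gm.V0
        · rw [hstep0 j h0]
          exact Gm.not_Zst_of_not_WW T Q (Gm.comp_V0 T Q hjZ hjQ h0 _ (hρ0 _ _ h0))
        · rw [hstep1 j h0]
          have h1 := Gm.mem_V1_of_not_V0 h0
          have hd : ¬ doomed T Q (hist j ++ [π j]) := by
            rw [← hist_succ]
            exact hPj
          exact Gm.not_Zst_of_not_WW T Q (Gm.rho1_escape T Q hd hjZ hjQ h1)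
  have hinQ : ∀ i, ¬ P i → π i ∈ Q := by
    intro i hPi
    by_contra hq
    refine hPi (hdoom_of i hq fun jj hjj => ?_)
    have hPjj : ¬ P jj := fun h => hPi (hPmono jj i hjj h)
    exact Gm.comp_notT T Q (houtZ jj hPjj)
  by_cases hD : ∃ d, P d
  · -- doomed case
    obtain ⟨d, hd⟩ := hD
    have hd' : doomed T Q (hist (d+1)) := hd
    rw [hist_eq] at hd'
    obtain ⟨idx, hlen, hidxQ, hidxT⟩ := hd'
    rw [List.getElem_ofFn] at hidxQ
    have hlen' : idx < d + 1 := by simpa using hlen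
    have hT' : ∀ j, j ≤ idx → π j ∉ T := by
      intro j hj
      have hjl : j < (List.ofFn fun j : Fin (d+1) => π j.1).length := by
        simp
        omega
      have := hidxT j hj hjl
      rwa [List.getElem_ofFn] at this
    have hnψ : ¬ ∃ k, π k ∈ T ∧ ∀ i < k, π i ∈ Q := by
      rintro ⟨k, hkT, hkQ⟩
      by_cases hk : k ≤ idx
      · exact hT' k hk hkT
      · exact hidxQ (hkQ idx (by omega))
    apply hnψ
    apply hmain
    apply Gm.fair_of_tail π (d+1)
    intro i hi h1
    have hPi : P i := hPmono d i (by omega) hd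
    refine ⟨Gm.fbFair (π i), ?_⟩
    rw [hstep1 i (Gm.not_V0_of_V1 h1), Gm.rho1_fair_mode T Q (by rw [← hist_succ]; exact hPi),
      hist_eq]
  · -- never doomed case
    push_neg at hD
    have hallZ : ∀ i, π i ∉ Gm.Zst T Q := fun i => houtZ i (hD i)
    have hallQ : ∀ i, π i ∈ Q := fun i => hinQ i (hD i)
    have hallT : ∀ i, π i ∉ T := fun i => Gm.comp_notT T Q (hallZ i)
    have hnψ : ¬ ∃ k, π k ∈ T ∧ ∀ i < k, π i ∈ Q := by
      rintro ⟨k, hkT, _⟩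
      exact hallT k hkT
    set r : ℕ → ℕ := fun i => Gm.nurank T Q (π i) with hr
    have hnd : ∀ i, ¬ doomed T Q (hist i ++ [π i]) := by
      intro i
      rw [← hist_succ]
      exact hD i
    have hrdec : ∀ i, r (i+1) ≤ r i := by
      intro i
      by_cases h0 : π i ∈ Gm.V0
      · apply Gm.nurank_le_of_notMem T Q
        rw [hstep0 i h0]
        exact Gm.comp_V0 T Q (hallZ i) (hallQ i) h0 _ (hρ0 _ _ h0)
      · apply Gm.nurank_le_of_notMem T Q
        rw [hstep1 i h0]
        exact Gm.rho1_escape T Q (hnd i) (hallZ i) (hallQ i) (Gm.mem_V1_of_not_V0 h0)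
    have hranti : Antitone r := antitone_nat_of_succ_le hrdec
    obtain ⟨N, hN⟩ : ∃ N, r N = sInf (Set.range r) := Nat.sInf_mem (Set.range_nonempty r)
    have hconst : ∀ i, N ≤ i → r i = r N := by
      intro i hi
      have h1 : r i ≤ r N := hranti hi
      have h2 : r N ≤ r i := by
        rw [hN]
        exact Nat.sInf_le ⟨i, rfl⟩
      omega
    apply hnψ
    apply hmain
    apply Gm.fair_of_tail π N
    intro i hi h1
    by_cases hex : ∃ w, Gm.E (π i) w ∧ w ∉ Gm.WW T Q (Gm.nurank T Q (π i) - 1)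
    · exfalso
      have hdec : π (i+1) ∉ Gm.WW T Q (Gm.nurank T Q (π i) - 1) := by
        rw [hstep1 i (Gm.not_V0_of_V1 h1)]
        exact Gm.rho1_escape_dec T Q (hnd i) (hallZ i) (hallQ i) h1 hex
      have h2 : r (i+1) ≤ r i - 1 := Gm.nurank_le_of_notMem T Q hdec
      have h3 : 1 ≤ r i := Gm.nurank_pos T Q (hallZ i)
      have h4 : r (i+1) = r N := hconst (i+1) (by omega)
      have h5 : r i = r N := hconst i hi
      omega
    · refine ⟨Gm.fbEsc T Q (π i), ?_⟩
      rw [hstep1 i (Gm.not_V0_of_V1 h1),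
        Gm.rho1_escape_rr T Q (hnd i) (hallZ i) (hallQ i) h1 hex, hist_eq]

end LiveGameGraph
/-- the fixpoint νY. μX. (T ∪ (Q ∩ Apre(Y,X))) equals the winning
region of Player 0 in the fair adversarial game for the safe-reachability
condition Q U T, and a memoryless winning Player-0 strategy exists on it. -/
theorem fair_adversarial_safe_reachability {V : Type*} [Fintype V]
    (Gm : LiveGameGraph V) (T Q : Set V) (Zstar : Set V)
    (hZ : Zstar = gfpSet fun Y => lfpSet fun X => T ∪ (Q ∩ Gm.apre Y X)) :
    Zstar = Gm.WinningRegion (fun π => ∃ k, π k ∈ T ∧ ∀ i < k, π i ∈ Q) ∧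
    ∃ σ : V → V, (∀ v ∈ Gm.V0, Gm.E v (σ v)) ∧
      ∀ v0 ∈ Zstar,
        Gm.WinsFrom (fun π => ∃ k, π k ∈ T ∧ ∀ i < k, π i ∈ Q)
          (fun _ v => σ v) v0 := by
  have hZst : Zstar = Gm.Zst T Q := by rw [hZ]; rfl
  constructor
  · rw [hZst]
    apply Set.eq_of_subset_of_subset
    · intro v hv
      exact ⟨_, Gm.soundness T Q hv⟩
    · intro v hv
      by_contra h
      exact Gm.completeness T Q h hv
  · exact ⟨Gm.sig T Q, fun v hv => Gm.sig_edge T Q v hv,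
      fun v0 hv0 => Gm.soundness T Q (hZst ▸ hv0)⟩
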